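/- For a general linear quantum system, suppose Ker(O_s) := ⋂_{k=0}^{2n-1} Ker(𝒞 (J_n Ω)^k) is invariant under Ω, i.e. Ω x ∈ Ker(O_s) for every x ∈ Ker(O_s). Let R̃_c̄ō := Ker(O_s) ∩ Ker(O_s J_n), where Ker(O_s J_n) := ⋂_{k=0}^{2n-1} Ker(𝒞 (J_n Ω)^k J_n). Then 𝒜 maps R̃_c̄ō into R̃_c̄ō, and 𝒜 maps the orthogonal complement (R̃_c̄ō)^⊥ into (R̃_c̄ō)^⊥ (equivalently, 𝒜ᴴ maps R̃_c̄ō into R̃_c̄ō). -/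

import Mathlib

open Matrix

noncomputable section

/-- `J_k = [I 0; 0 -I]` acting on `ℂ^{2k} = ℂ^k ⊕ ℂ^k`. -/
def Jmat (k : ℕ) : Matrix (Fin k ⊕ Fin k) (Fin k ⊕ Fin k) ℂ :=
  Matrix.fromBlocks 1 0 0 (-1)

/-- Entrywise complex conjugation of a matrix. -/
def mconj {α β : Type} (M : Matrix α β ℂ) : Matrix α β ℂ :=
  M.map (starRingEnd ℂ)

/-- The doubled-up matrix `Δ(U,V) = [U V; conj V  conj U]`. -/
def doubledUp {k r : ℕ} (U V : Matrix (Fin k) (Fin r) ℂ) :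
    Matrix (Fin k ⊕ Fin k) (Fin r ⊕ Fin r) ℂ :=
  Matrix.fromBlocks U V (mconj V) (mconj U)

/-- The ♭-adjoint `X♭ = J_r Xᴴ J_k` of `X ∈ ℂ^{2k×2r}`. -/
def flat {k r : ℕ} (X : Matrix (Fin k ⊕ Fin k) (Fin r ⊕ Fin r) ℂ) :
    Matrix (Fin r ⊕ Fin r) (Fin k ⊕ Fin k) ℂ :=
  Jmat r * Xᴴ * Jmat k

/-- Orthogonal complement of a subspace of `ℂ^ι` w.r.t. the standard Hermitian
inner product `⟪y, x⟫ = (star y) ⬝ᵥ x`. -/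
def orthComp {ι : Type} [Fintype ι] (S : Submodule ℂ (ι → ℂ)) : Submodule ℂ (ι → ℂ) where
  carrier := {x | ∀ y ∈ S, star y ⬝ᵥ x = 0}
  add_mem' := by
    intro a b ha hb y hy
    simp only [Set.mem_setOf_eq] at *
    rw [dotProduct_add, ha y hy, hb y hy, add_zero]
  zero_mem' := by
    intro y hy
    simp
  smul_mem' := by
    intro c x hx y hy
    simp only [Set.mem_setOf_eq] at *
    rw [dotProduct_smul, hx y hy, smul_zero]

/-- The controllable subspace `Im(C_G) = ∑_{k<2n} Im(𝒜ᵏℬ)`. -/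
def ctrbSub (n m : ℕ) (𝒜 : Matrix (Fin n ⊕ Fin n) (Fin n ⊕ Fin n) ℂ)
    (ℬ : Matrix (Fin n ⊕ Fin n) (Fin m ⊕ Fin m) ℂ) : Submodule ℂ (Fin n ⊕ Fin n → ℂ) :=
  ⨆ k ∈ Finset.range (2 * n), LinearMap.range ((𝒜 ^ k * ℬ).mulVecLin)

/-- The unobservable subspace `Ker(O_G) = ⋂_{k<2n} Ker(𝒞𝒜ᵏ)`. -/
def unobsSub (n m : ℕ) (𝒜 : Matrix (Fin n ⊕ Fin n) (Fin n ⊕ Fin n) ℂ)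
    (𝒞 : Matrix (Fin m ⊕ Fin m) (Fin n ⊕ Fin n) ℂ) : Submodule ℂ (Fin n ⊕ Fin n → ℂ) :=
  ⨅ k ∈ Finset.range (2 * n), LinearMap.ker ((𝒞 * 𝒜 ^ k).mulVecLin)

/-!
The unobservable subspace `U = Ker(O_s)` is invariant under `M = J Ω` by Cayley–Hamilton, and
`Ker(O_s J) = J⁻¹ U`. On `U` the damping term of `𝒜` vanishes, so `𝒜 = -i M` there; dually, on
`J⁻¹ U` the damping term of `𝒜ᴴ` vanishes, so `𝒜ᴴ = i Ω J` there. Since `J² = 1`, the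
`Ω`-invariance of `U` together with the `M`-invariance makes both `M` and `Ω J` preserve
`U ∩ J⁻¹ U`, and `𝒜ᴴ`-invariance of a subspace is `𝒜`-invariance of its orthogonal complement.
-/

open Polynomial

theorem Matrix.mul_pow_mulVec_eq_zero_of_forall_lt_card {R ι κ : Type*} [CommRing R]
    [Nontrivial R] [Fintype ι] [DecidableEq ι] (C : Matrix κ ι R) (M : Matrix ι ι R)
    {x : ι → R} (h : ∀ k < Fintype.card ι, (C * M ^ k) *ᵥ x = 0) (j : ℕ) :
    (C * M ^ j) *ᵥ x = 0 := by
  rw [M.pow_eq_aeval_mod_charpoly j, aeval_eq_sum_range, Matrix.mul_sum, sum_mulVec]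
  refine Finset.sum_eq_zero fun i _ => ?_
  rw [Matrix.mul_smul, smul_mulVec]
  rcases lt_or_ge i (Fintype.card ι) with hi | hi
  · rw [h i hi, smul_zero]
  · have hdeg : (X ^ j %ₘ M.charpoly).degree < i := calc
      _ < M.charpoly.degree := degree_modByMonic_lt _ M.charpoly_monic
      _ = Fintype.card ι := M.charpoly_degree_eq_dim
      _ ≤ i := by exact_mod_cast hi
    rw [coeff_eq_zero_of_degree_lt hdeg, zero_smul]

theorem iInf_ker_mul_mulVecLin {R α ι κ : Type*} [CommSemiring R] [Fintype ι] (s : Finset α)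
    (f : α → Matrix κ ι R) (J : Matrix ι ι R) :
    ⨅ k ∈ s, LinearMap.ker (f k * J).mulVecLin =
      (⨅ k ∈ s, LinearMap.ker (f k).mulVecLin).comap J.mulVecLin := by
  simp only [mulVecLin_mul, LinearMap.ker_comp, Submodule.comap_iInf]

section Invariance

variable {R ι : Type*} [CommSemiring R] [Fintype ι] {J Ω : Matrix ι ι R}
  {U : Submodule R (ι → R)}

theorem mul_mulVec_mem_inf_comap [DecidableEq ι] (hJ : J * J = 1)
    (hΩ : ∀ x ∈ U, Ω *ᵥ x ∈ U) (hM : ∀ x ∈ U, (J * Ω) *ᵥ x ∈ U) {x : ι → R} (hx : x ∈ U) :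
    (J * Ω) *ᵥ x ∈ U ⊓ U.comap J.mulVecLin := by
  refine ⟨hM x hx, ?_⟩
  simpa [mulVec_mulVec, ← Matrix.mul_assoc, hJ] using hΩ x hx

theorem mul_mulVec_mem_inf_comap_of_mem_comap (hΩ : ∀ x ∈ U, Ω *ᵥ x ∈ U)
    (hM : ∀ x ∈ U, (J * Ω) *ᵥ x ∈ U) {y : ι → R} (hy : y ∈ U.comap J.mulVecLin) :
    (Ω * J) *ᵥ y ∈ U ⊓ U.comap J.mulVecLin := by
  refine ⟨by simpa [← mulVec_mulVec] using hΩ _ hy, ?_⟩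
  simpa [mulVec_mulVec, Matrix.mul_assoc] using hM _ hy

end Invariance

theorem mulVec_mem_orthComp {ι : Type} [Fintype ι] {S : Submodule ℂ (ι → ℂ)}
    {A : Matrix ι ι ℂ} (hA : ∀ y ∈ S, Aᴴ *ᵥ y ∈ S) {x : ι → ℂ} (hx : x ∈ orthComp S) :
    A *ᵥ x ∈ orthComp S := fun y hy => by
  simpa [star_mulVec, dotProduct_mulVec] using hx _ (hA y hy)

theorem Jmat_mul_self (k : ℕ) : Jmat k * Jmat k = 1 := by
  simp [Jmat, fromBlocks_multiply, ← fromBlocks_one]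

theorem conjTranspose_Jmat (k : ℕ) : (Jmat k)ᴴ = Jmat k := by
  simp [Jmat, fromBlocks_conjTranspose]

theorem conjTranspose_flat {k r : ℕ} (X : Matrix (Fin k ⊕ Fin k) (Fin r ⊕ Fin r) ℂ) :
    (flat X)ᴴ = Jmat k * X * Jmat r := by
  simp [flat, conjTranspose_Jmat, Matrix.mul_assoc]

section UnobsSub

variable {n m : ℕ} {A : Matrix (Fin n ⊕ Fin n) (Fin n ⊕ Fin n) ℂ}
  {C : Matrix (Fin m ⊕ Fin m) (Fin n ⊕ Fin n) ℂ} {x : Fin n ⊕ Fin n → ℂ}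

theorem mem_unobsSub_iff : x ∈ unobsSub n m A C ↔ ∀ k, (C * A ^ k) *ᵥ x = 0 := by
  simp only [unobsSub, Submodule.mem_iInf, Finset.mem_range, LinearMap.mem_ker,
    mulVecLin_apply]
  refine ⟨fun h => C.mul_pow_mulVec_eq_zero_of_forall_lt_card A fun k hk => h k ?_,
    fun h k _ => h k⟩
  simpa [two_mul] using hk

theorem mulVec_eq_zero_of_mem_unobsSub (hx : x ∈ unobsSub n m A C) : C *ᵥ x = 0 := by
  simpa using mem_unobsSub_iff.1 hx 0

theorem mulVec_mem_unobsSub (hx : x ∈ unobsSub n m A C) : A *ᵥ x ∈ unobsSub n m A C :=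
  mem_unobsSub_iff.2 fun k => by
    simpa [mulVec_mulVec, Matrix.mul_assoc, ← pow_succ] using mem_unobsSub_iff.1 hx (k + 1)

end UnobsSub

section SystemMatrix

variable {n m : ℕ} {Ω : Matrix (Fin n ⊕ Fin n) (Fin n ⊕ Fin n) ℂ}
  {𝒞 : Matrix (Fin m ⊕ Fin m) (Fin n ⊕ Fin n) ℂ} {x : Fin n ⊕ Fin n → ℂ}

theorem systemMatrix_mulVec_of_mulVec_eq_zero (hx : 𝒞 *ᵥ x = 0) :
    ((-Complex.I) • (Jmat n * Ω) - (1 / 2 : ℂ) • (flat 𝒞 * 𝒞)) *ᵥ x =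
      (-Complex.I) • ((Jmat n * Ω) *ᵥ x) := by
  rw [sub_mulVec, smul_mulVec, smul_mulVec, ← mulVec_mulVec x (flat 𝒞), hx, mulVec_zero,
    smul_zero, sub_zero]

theorem conjTranspose_systemMatrix_mulVec_of_mulVec_Jmat_eq_zero (hΩ : Ω.IsHermitian)
    (hx : 𝒞 *ᵥ (Jmat n *ᵥ x) = 0) :
    ((-Complex.I) • (Jmat n * Ω) - (1 / 2 : ℂ) • (flat 𝒞 * 𝒞))ᴴ *ᵥ x =
      Complex.I • ((Ω * Jmat n) *ᵥ x) := by
  have hflat : (flat 𝒞 * 𝒞)ᴴ *ᵥ x = 0 := by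
    simp [conjTranspose_flat, ← mulVec_mulVec, hx]
  rw [conjTranspose_sub, conjTranspose_smul, conjTranspose_smul, sub_mulVec, smul_mulVec,
    smul_mulVec, hflat, conjTranspose_mul, conjTranspose_Jmat, hΩ.eq]
  simp

end SystemMatrix

theorem prop_Rc_invariance_general
    (n m : ℕ)
    (Ω : Matrix (Fin n ⊕ Fin n) (Fin n ⊕ Fin n) ℂ)
    (hΩH : Ω.IsHermitian)
    (𝒞 : Matrix (Fin m ⊕ Fin m) (Fin n ⊕ Fin n) ℂ)
    (𝒜 : Matrix (Fin n ⊕ Fin n) (Fin n ⊕ Fin n) ℂ)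
    (h𝒜 : 𝒜 = (-Complex.I) • (Jmat n * Ω) - (1 / 2 : ℂ) • (flat 𝒞 * 𝒞))
    (KOs : Submodule ℂ (Fin n ⊕ Fin n → ℂ))
    (hKOs : KOs = ⨅ k ∈ Finset.range (2 * n),
      LinearMap.ker ((𝒞 * (Jmat n * Ω) ^ k).mulVecLin))
    (KOsJ : Submodule ℂ (Fin n ⊕ Fin n → ℂ))
    (hKOsJ : KOsJ = ⨅ k ∈ Finset.range (2 * n),
      LinearMap.ker ((𝒞 * (Jmat n * Ω) ^ k * Jmat n).mulVecLin))
    (hinv : ∀ x ∈ KOs, Ω *ᵥ x ∈ KOs) :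
    (∀ x ∈ KOs ⊓ KOsJ, 𝒜 *ᵥ x ∈ KOs ⊓ KOsJ) ∧
    (∀ x ∈ orthComp (KOs ⊓ KOsJ), 𝒜 *ᵥ x ∈ orthComp (KOs ⊓ KOsJ)) := by
  rw [iInf_ker_mul_mulVecLin, ← hKOs] at hKOsJ
  obtain rfl : KOs = unobsSub n m (Jmat n * Ω) 𝒞 := hKOs
  subst hKOsJ h𝒜
  refine ⟨fun x hx => ?_, fun x => mulVec_mem_orthComp fun y hy => ?_⟩
  · rw [systemMatrix_mulVec_of_mulVec_eq_zero (mulVec_eq_zero_of_mem_unobsSub hx.1)]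
    exact Submodule.smul_mem _ _ (mul_mulVec_mem_inf_comap (Jmat_mul_self n) hinv
      (fun _ => mulVec_mem_unobsSub) hx.1)
  · rw [conjTranspose_systemMatrix_mulVec_of_mulVec_Jmat_eq_zero hΩH
      (mulVec_eq_zero_of_mem_unobsSub hy.2)]
    exact Submodule.smul_mem _ _ (mul_mulVec_mem_inf_comap_of_mem_comap hinv
      (fun _ => mulVec_mem_unobsSub) hy.2)

/-- **Proposition 1.** For a general linear quantum system, if `Ker(O_s)` is invariant
under `Ω`, then `𝒜` maps `R̃_c̄ō = Ker(O_s) ∩ Ker(O_s J_n)` into itself and maps its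
orthogonal complement into itself. -/
theorem prop_Rc_invariance
    (n m : ℕ) (hn : 0 < n) (hm : 0 < m)
    (Ωm Ωp : Matrix (Fin n) (Fin n) ℂ) (Cm Cp : Matrix (Fin m) (Fin n) ℂ)
    (Ω : Matrix (Fin n ⊕ Fin n) (Fin n ⊕ Fin n) ℂ) (hΩ : Ω = doubledUp Ωm Ωp)
    (hΩH : Ω.IsHermitian)
    (𝒞 : Matrix (Fin m ⊕ Fin m) (Fin n ⊕ Fin n) ℂ) (h𝒞 : 𝒞 = doubledUp Cm Cp)
    (𝒜 : Matrix (Fin n ⊕ Fin n) (Fin n ⊕ Fin n) ℂ)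
    (h𝒜 : 𝒜 = (-Complex.I) • (Jmat n * Ω) - (1 / 2 : ℂ) • (flat 𝒞 * 𝒞))
    (ℬ : Matrix (Fin n ⊕ Fin n) (Fin m ⊕ Fin m) ℂ) (hℬ : ℬ = -flat 𝒞)
    (KOs : Submodule ℂ (Fin n ⊕ Fin n → ℂ))
    (hKOs : KOs = ⨅ k ∈ Finset.range (2 * n),
      LinearMap.ker ((𝒞 * (Jmat n * Ω) ^ k).mulVecLin))
    (KOsJ : Submodule ℂ (Fin n ⊕ Fin n → ℂ))
    (hKOsJ : KOsJ = ⨅ k ∈ Finset.range (2 * n),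
      LinearMap.ker ((𝒞 * (Jmat n * Ω) ^ k * Jmat n).mulVecLin))
    (hinv : ∀ x ∈ KOs, Ω *ᵥ x ∈ KOs) :
    (∀ x ∈ KOs ⊓ KOsJ, 𝒜 *ᵥ x ∈ KOs ⊓ KOsJ) ∧
    (∀ x ∈ orthComp (KOs ⊓ KOsJ), 𝒜 *ᵥ x ∈ orthComp (KOs ⊓ KOsJ)) :=
  prop_Rc_invariance_general n m Ω hΩH 𝒞 𝒜 h𝒜 KOs hKOs KOsJ hKOsJ hinv
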